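/- arXiv:2501.11975 — 2 statements merged into one kernel-verified Lean document; each statement's English description precedes it below -/
import Mathlib

section
/- Let (H, ⇀, ↼) be a matched pair of actions on a Hopf algebra H. Then for all x, y ∈ H, S(x ⇀ y) = (x ↼ y₁) ⇀ S(y₂), where S is the antipode of H and Sweedler notation Δ(y) = y₁ ⊗ y₂ is used. -/
open TensorProduct Coalgebra HopfAlgebra LinearMap

noncomputable section

variable (k H : Type*) [CommRing k] [Ring H] [HopfAlgebra k H]

/-- `f` is a left `H`-module coalgebra action of the Hopf algebra `H` on itself. -/
structure IsLeftModCoalgAction (f : H ⊗[k] H →ₗ[k] H) : Prop where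
  one_act : ∀ a : H, f (1 ⊗ₜ a) = a
  mul_act : ∀ x y a : H, f ((x * y) ⊗ₜ a) = f (x ⊗ₜ f (y ⊗ₜ a))
  counit_act : ∀ x a : H, counit (R := k) (f (x ⊗ₜ a)) = counit (R := k) x * counit (R := k) a
  comul_act : ∀ (x a : H) {ι κ : Type*} (rx : Coalgebra.Repr k x ι) (ra : Coalgebra.Repr k a κ),
      comul (R := k) (f (x ⊗ₜ a)) =
        ∑ i ∈ rx.index, ∑ j ∈ ra.index,
          f (rx.left i ⊗ₜ ra.left j) ⊗ₜ[k] f (rx.right i ⊗ₜ ra.right j)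

/-- `g` is a right `H`-module coalgebra action of the Hopf algebra `H` on itself. -/
structure IsRightModCoalgAction (g : H ⊗[k] H →ₗ[k] H) : Prop where
  act_one : ∀ x : H, g (x ⊗ₜ 1) = x
  act_mul : ∀ x a b : H, g (x ⊗ₜ (a * b)) = g (g (x ⊗ₜ a) ⊗ₜ b)
  counit_act : ∀ x a : H, counit (R := k) (g (x ⊗ₜ a)) = counit (R := k) x * counit (R := k) a
  comul_act : ∀ (x a : H) {ι κ : Type*} (rx : Coalgebra.Repr k x ι) (ra : Coalgebra.Repr k a κ),
      comul (R := k) (g (x ⊗ₜ a)) =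
        ∑ i ∈ rx.index, ∑ j ∈ ra.index,
          g (rx.left i ⊗ₜ ra.left j) ⊗ₜ[k] g (rx.right i ⊗ₜ ra.right j)

universe u₁ u₂ u₃ u₄

/-- `(H, f, g)` (written `(H, ⇀, ↼)`) is a matched pair of actions on the Hopf algebra `H`:
`f` is a left module coalgebra action, `g` a right module coalgebra action, satisfying the
matched pair conditions (MP1)–(MP5) and the extra condition `xy = (x₁ ⇀ y₁)(x₂ ↼ y₂)`. -/
structure IsMatchedPairOfActions (f g : H ⊗[k] H →ₗ[k] H) : Prop where
  left_action : IsLeftModCoalgAction.{_, _, u₁, u₂} k H f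
  right_action : IsRightModCoalgAction.{_, _, u₃, u₄} k H g
  mp1 : ∀ (x a b : H) {ι κ : Type*} (rx : Coalgebra.Repr k x ι) (ra : Coalgebra.Repr k a κ),
      f (x ⊗ₜ (a * b)) =
        ∑ i ∈ rx.index, ∑ j ∈ ra.index,
          f (rx.left i ⊗ₜ ra.left j) * f (g (rx.right i ⊗ₜ ra.right j) ⊗ₜ b)
  mp2 : ∀ x : H, f (x ⊗ₜ 1) = counit (R := k) x • (1 : H)
  mp3 : ∀ (x y a : H) {ι κ : Type*} (ry : Coalgebra.Repr k y ι) (ra : Coalgebra.Repr k a κ),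
      g ((x * y) ⊗ₜ a) =
        ∑ i ∈ ry.index, ∑ j ∈ ra.index,
          g (x ⊗ₜ f (ry.left i ⊗ₜ ra.left j)) * g (ry.right i ⊗ₜ ra.right j)
  mp4 : ∀ a : H, g ((1 : H) ⊗ₜ a) = counit (R := k) a • (1 : H)
  mp5 : ∀ (x a : H) {ι κ : Type*} (rx : Coalgebra.Repr k x ι) (ra : Coalgebra.Repr k a κ),
      (∑ i ∈ rx.index, ∑ j ∈ ra.index,
        f (rx.left i ⊗ₜ ra.left j) ⊗ₜ[k] g (rx.right i ⊗ₜ ra.right j)) =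
      ∑ i ∈ rx.index, ∑ j ∈ ra.index,
        f (rx.right i ⊗ₜ ra.right j) ⊗ₜ[k] g (rx.left i ⊗ₜ ra.left j)
  mp_mul : ∀ (x y : H) {ι κ : Type*} (rx : Coalgebra.Repr k x ι) (ry : Coalgebra.Repr k y κ),
      x * y = ∑ i ∈ rx.index, ∑ j ∈ ry.index,
        f (rx.left i ⊗ₜ ry.left j) * g (rx.right i ⊗ₜ ry.right j)

/-- The braiding operator `r(x ⊗ y) = (x₁ ⇀ y₁) ⊗ (x₂ ↼ y₂)` associated to the pair `(f, g)`. -/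
def braidOp (f g : H ⊗[k] H →ₗ[k] H) : H ⊗[k] H →ₗ[k] H ⊗[k] H :=
  TensorProduct.map f g ∘ₗ (tensorTensorTensorComm k H H H H).toLinearMap
    ∘ₗ TensorProduct.map (comul (R := k)) (comul (R := k))


namespace MPAux
variable {k H}

/-! Auxiliary development: a hand-rolled convolution algebra on `H ⊗[k] H →ₗ[k] H`
(avoiding mathlib's universe-restricted tensor-coalgebra instance). -/

/-- comultiplication on `H ⊗ H`. -/
def comul2 : H ⊗[k] H →ₗ[k] (H ⊗[k] H) ⊗[k] (H ⊗[k] H) :=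
  (tensorTensorTensorComm k H H H H).toLinearMap ∘ₗ
    TensorProduct.map (comul (R := k)) (comul (R := k))

/-- the unit for convolution. -/
def uC : H ⊗[k] H →ₗ[k] H :=
  Algebra.linearMap k H ∘ₗ LinearMap.mul' k k ∘ₗ
    TensorProduct.map (counit (R := k)) (counit (R := k))

/-- convolution product. -/
def conv (φ ψ : H ⊗[k] H →ₗ[k] H) : H ⊗[k] H →ₗ[k] H :=
  LinearMap.mul' k H ∘ₗ TensorProduct.map φ ψ ∘ₗ comul2

lemma conv_apply (φ ψ : H ⊗[k] H →ₗ[k] H) (t : H ⊗[k] H) :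
    conv φ ψ t = LinearMap.mul' k H (TensorProduct.map φ ψ (comul2 t)) := rfl

lemma sum_counit_smul {a : H} {ι : Type*} (r : Coalgebra.Repr k a ι) :
    ∑ i ∈ r.index, counit (R := k) (r.left i) • r.right i = a := by
  have h := congrArg (TensorProduct.lid k H) (Coalgebra.sum_counit_tmul_eq (R := k) r)
  simp only [map_sum, lid_tmul, one_smul] at h
  exact h

lemma sum_smul_counit {a : H} {ι : Type*} (r : Coalgebra.Repr k a ι) :
    ∑ i ∈ r.index, counit (R := k) (r.right i) • r.left i = a := by
  have h := congrArg (TensorProduct.rid k H) (Coalgebra.sum_tmul_counit_eq (R := k) r)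
  simp only [map_sum, rid_tmul, one_smul] at h
  exact h

universe w

/-- a copy of a representation whose index type lives in an arbitrary universe. -/
def uliftRepr {a : H} {ι : Type*} (r : Coalgebra.Repr k a ι) :
    Coalgebra.Repr k a (ULift.{w} (Fin r.index.card)) where
  index := Finset.univ
  left := fun i => r.left (r.index.equivFin.symm i.down).1
  right := fun i => r.right (r.index.equivFin.symm i.down).1
  eq := by
    rw [← r.eq, ← Finset.sum_coe_sort r.index (fun i => r.left i ⊗ₜ[k] r.right i)]
    exact Fintype.sum_equiv (Equiv.ulift.trans r.index.equivFin.symm) _ _ (fun i => rfl)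

lemma uliftRepr_sum {M : Type*} [AddCommMonoid M] {a : H} {ι : Type*} (r : Coalgebra.Repr k a ι)
    (F : H → H → M) :
    ∑ i ∈ (uliftRepr r).index, F ((uliftRepr r).left i) ((uliftRepr r).right i) =
    ∑ i ∈ r.index, F (r.left i) (r.right i) := by
  rw [← Finset.sum_coe_sort r.index (fun i => F (r.left i) (r.right i))]
  exact Fintype.sum_equiv (Equiv.ulift.trans r.index.equivFin.symm) _ _ (fun i => rfl)

lemma uliftRepr_sum2 {M : Type*} [AddCommMonoid M] {a b : H} {ι κ : Type*} (r : Coalgebra.Repr k a ι)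
    (s : Coalgebra.Repr k b κ) (F : H → H → H → H → M) :
    (∑ i ∈ (uliftRepr r).index, ∑ j ∈ (uliftRepr s).index,
      F ((uliftRepr r).left i) ((uliftRepr r).right i)
        ((uliftRepr s).left j) ((uliftRepr s).right j)) =
    ∑ i ∈ r.index, ∑ j ∈ s.index, F (r.left i) (r.right i) (s.left j) (s.right j) := by
  trans ∑ i ∈ r.index, ∑ j ∈ (uliftRepr s).index,
    F (r.left i) (r.right i) ((uliftRepr s).left j) ((uliftRepr s).right j)
  · rw [← Finset.sum_coe_sort r.index]
    exact Fintype.sum_equiv (Equiv.ulift.trans r.index.equivFin.symm) _ _ fun i => rfl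
  · refine Finset.sum_congr rfl fun i _ => ?_
    rw [← Finset.sum_coe_sort s.index]
    exact Fintype.sum_equiv (Equiv.ulift.trans s.index.equivFin.symm) _ _ fun j => rfl

lemma conv_uC_left (φ : H ⊗[k] H →ₗ[k] H) : conv uC φ = φ := by
  apply TensorProduct.ext'
  intro x y
  simp only [conv, comul2, uC, coe_comp, Function.comp_apply, LinearEquiv.coe_coe, map_tmul]
  rw [← (ℛ k x).eq, ← (ℛ k y).eq]
  simp only [coe_comp, Function.comp_apply, LinearEquiv.coe_coe, sum_tmul, tmul_sum, map_sum,
    tensorTensorTensorComm_tmul, map_tmul, mul'_apply, Algebra.linearMap_apply,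
    ← Algebra.smul_def]
  rw [Finset.sum_comm]
  have key : φ ((∑ i ∈ (ℛ k x).index, counit (R := k) ((ℛ k x).left i) • (ℛ k x).right i) ⊗ₜ[k]
      (∑ j ∈ (ℛ k y).index, counit (R := k) ((ℛ k y).left j) • (ℛ k y).right j)) =
      ∑ i ∈ (ℛ k x).index, ∑ j ∈ (ℛ k y).index,
        (counit (R := k) ((ℛ k x).left i) * counit (R := k) ((ℛ k y).left j)) •
          φ ((ℛ k x).right i ⊗ₜ[k] (ℛ k y).right j) := by
    rw [sum_tmul, map_sum]
    refine Finset.sum_congr rfl fun i _ => ?_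
    rw [tmul_sum, map_sum]
    refine Finset.sum_congr rfl fun j _ => ?_
    rw [tmul_smul, ← smul_tmul', map_smul, map_smul, smul_smul, mul_comm]
  rw [sum_counit_smul, sum_counit_smul] at key
  rw [← key]

lemma conv_uC_right (φ : H ⊗[k] H →ₗ[k] H) : conv φ uC = φ := by
  apply TensorProduct.ext'
  intro x y
  simp only [conv, comul2, uC, coe_comp, Function.comp_apply, LinearEquiv.coe_coe, map_tmul]
  rw [← (ℛ k x).eq, ← (ℛ k y).eq]
  simp only [coe_comp, Function.comp_apply, LinearEquiv.coe_coe, sum_tmul, tmul_sum, map_sum,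
    tensorTensorTensorComm_tmul, map_tmul, mul'_apply, Algebra.linearMap_apply]
  rw [Finset.sum_comm]
  have key : φ ((∑ i ∈ (ℛ k x).index, counit (R := k) ((ℛ k x).right i) • (ℛ k x).left i) ⊗ₜ[k]
      (∑ j ∈ (ℛ k y).index, counit (R := k) ((ℛ k y).right j) • (ℛ k y).left j)) =
      ∑ i ∈ (ℛ k x).index, ∑ j ∈ (ℛ k y).index,
        φ ((ℛ k x).left i ⊗ₜ[k] (ℛ k y).left j) *
          algebraMap k H
            (counit (R := k) ((ℛ k x).right i) * counit (R := k) ((ℛ k y).right j)) := by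
    rw [sum_tmul, map_sum]
    refine Finset.sum_congr rfl fun i _ => ?_
    rw [tmul_sum, map_sum]
    refine Finset.sum_congr rfl fun j _ => ?_
    rw [tmul_smul, ← smul_tmul', map_smul, map_smul, smul_smul, ← Algebra.commutes,
      ← Algebra.smul_def, mul_comm]
  rw [sum_smul_counit, sum_smul_counit] at key
  rw [← key]

lemma mulassoc : LinearMap.mul' k H ∘ₗ (LinearMap.mul' k H).rTensor H =
    LinearMap.mul' k H ∘ₗ (LinearMap.mul' k H).lTensor H ∘ₗ
      (TensorProduct.assoc k H H H).toLinearMap := by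
  apply TensorProduct.ext_threefold
  intro a b c
  simp [mul_assoc]

lemma assoc_nat {M₁ M₂ M₃ N₁ N₂ N₃ : Type*} [AddCommMonoid M₁] [AddCommMonoid M₂]
    [AddCommMonoid M₃] [AddCommMonoid N₁] [AddCommMonoid N₂] [AddCommMonoid N₃]
    [Module k M₁] [Module k M₂] [Module k M₃] [Module k N₁] [Module k N₂] [Module k N₃]
    (φ : M₁ →ₗ[k] N₁) (ψ : M₂ →ₗ[k] N₂) (χ : M₃ →ₗ[k] N₃) :
    (TensorProduct.assoc k N₁ N₂ N₃).toLinearMap ∘ₗ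
        TensorProduct.map (TensorProduct.map φ ψ) χ =
      TensorProduct.map φ (TensorProduct.map ψ χ) ∘ₗ
        (TensorProduct.assoc k M₁ M₂ M₃).toLinearMap := by
  apply TensorProduct.ext_threefold
  intro a b c
  simp

def rho : H →ₗ[k] (H ⊗[k] H) ⊗[k] H := (comul (R := k)).rTensor H ∘ₗ comul
def lam : H →ₗ[k] H ⊗[k] (H ⊗[k] H) := (comul (R := k)).lTensor H ∘ₗ comul

lemma assoc_rho : (TensorProduct.assoc k H H H).toLinearMap ∘ₗ rho (k := k) (H := H) = lam := by
  ext a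
  simp only [rho, lam, coe_comp, Function.comp_apply, LinearEquiv.coe_coe]
  exact Coalgebra.coassoc_apply a

def Psi1 : ((H ⊗[k] H) ⊗[k] H) ⊗[k] ((H ⊗[k] H) ⊗[k] H) →ₗ[k]
    (H ⊗[k] H) ⊗[k] ((H ⊗[k] H) ⊗[k] (H ⊗[k] H)) :=
  (TensorProduct.assoc k (H ⊗[k] H) (H ⊗[k] H) (H ⊗[k] H)).toLinearMap ∘ₗ
    ((tensorTensorTensorComm k H H H H).toLinearMap).rTensor (H ⊗[k] H) ∘ₗ
    (tensorTensorTensorComm k (H ⊗[k] H) H (H ⊗[k] H) H).toLinearMap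

def Psi2 : (H ⊗[k] (H ⊗[k] H)) ⊗[k] (H ⊗[k] (H ⊗[k] H)) →ₗ[k]
    (H ⊗[k] H) ⊗[k] ((H ⊗[k] H) ⊗[k] (H ⊗[k] H)) :=
  ((tensorTensorTensorComm k H H H H).toLinearMap).lTensor (H ⊗[k] H) ∘ₗ
    (tensorTensorTensorComm k H (H ⊗[k] H) H (H ⊗[k] H)).toLinearMap

set_option synthInstance.maxHeartbeats 800000 in
set_option maxHeartbeats 1000000 in
lemma P1 : (TensorProduct.assoc k (H ⊗[k] H) (H ⊗[k] H) (H ⊗[k] H)).toLinearMap ∘ₗ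
      (comul2 (k := k) (H := H)).rTensor (H ⊗[k] H) ∘ₗ comul2 =
    Psi1 ∘ₗ TensorProduct.map rho rho := by
  apply TensorProduct.ext'
  intro x y
  simp only [comul2, Psi1, rho, coe_comp, Function.comp_apply, LinearEquiv.coe_coe, map_tmul]
  rw [← (ℛ k x).eq, ← (ℛ k y).eq]
  simp [sum_tmul, tmul_sum, map_sum, tensorTensorTensorComm_tmul, rTensor_tmul]

set_option synthInstance.maxHeartbeats 800000 in
set_option maxHeartbeats 1000000 in
lemma P2 : (comul2 (k := k) (H := H)).lTensor (H ⊗[k] H) ∘ₗ comul2 =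
    Psi2 ∘ₗ TensorProduct.map lam lam := by
  apply TensorProduct.ext'
  intro x y
  simp only [comul2, Psi2, lam, coe_comp, Function.comp_apply, LinearEquiv.coe_coe, map_tmul]
  rw [← (ℛ k x).eq, ← (ℛ k y).eq]
  simp [sum_tmul, tmul_sum, map_sum, tensorTensorTensorComm_tmul, lTensor_tmul]

lemma P3 : Psi1 (k := k) (H := H) = Psi2 ∘ₗ
    TensorProduct.map (TensorProduct.assoc k H H H).toLinearMap
      (TensorProduct.assoc k H H H).toLinearMap := by
  ext a b c d e f'
  simp [Psi1, Psi2]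

lemma coassoc2 : (TensorProduct.assoc k (H ⊗[k] H) (H ⊗[k] H) (H ⊗[k] H)).toLinearMap ∘ₗ
      (comul2 (k := k) (H := H)).rTensor (H ⊗[k] H) ∘ₗ comul2 =
    comul2.lTensor (H ⊗[k] H) ∘ₗ comul2 := by
  rw [P1, P2, P3]
  rw [LinearMap.comp_assoc, ← TensorProduct.map_comp, assoc_rho]

lemma conv_assoc (φ ψ χ : H ⊗[k] H →ₗ[k] H) :
    conv (conv φ ψ) χ = conv φ (conv ψ χ) := by
  have e1 : TensorProduct.map (conv φ ψ) χ =
      (LinearMap.mul' k H).rTensor H ∘ₗ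
        TensorProduct.map (TensorProduct.map φ ψ) χ ∘ₗ
        (comul2 (k := k) (H := H)).rTensor (H ⊗[k] H) := by
    apply TensorProduct.ext'
    intro u w
    simp [conv, rTensor_tmul]
  have e2 : TensorProduct.map φ (conv ψ χ) =
      (LinearMap.mul' k H).lTensor H ∘ₗ
        TensorProduct.map φ (TensorProduct.map ψ χ) ∘ₗ
        (comul2 (k := k) (H := H)).lTensor (H ⊗[k] H) := by
    apply TensorProduct.ext'
    intro u w
    simp [conv, lTensor_tmul]
  apply LinearMap.ext
  intro v
  have h3 := LinearMap.congr_fun (mulassoc (k := k) (H := H))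
    (TensorProduct.map (TensorProduct.map φ ψ) χ
      ((comul2 (k := k) (H := H)).rTensor (H ⊗[k] H) (comul2 v)))
  have h4 := LinearMap.congr_fun
    (assoc_nat (k := k) φ ψ χ) ((comul2 (k := k) (H := H)).rTensor (H ⊗[k] H) (comul2 v))
  have h5 := LinearMap.congr_fun (coassoc2 (k := k) (H := H)) v
  simp only [coe_comp, Function.comp_apply, LinearEquiv.coe_coe] at h3 h4 h5
  show LinearMap.mul' k H (TensorProduct.map (conv φ ψ) χ (comul2 v)) =
    LinearMap.mul' k H (TensorProduct.map φ (conv ψ χ) (comul2 v))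
  rw [e1, e2]
  simp only [coe_comp, Function.comp_apply]
  rw [h3, h4, h5]

variable {f g : H ⊗[k] H →ₗ[k] H}

lemma comul_comp_f (hf : IsLeftModCoalgAction k H f) :
    comul (R := k) ∘ₗ f = TensorProduct.map f f ∘ₗ comul2 := by
  apply TensorProduct.ext'
  intro x a
  simp only [comul2, coe_comp, Function.comp_apply, LinearEquiv.coe_coe, map_tmul]
  rw [hf.comul_act x a (uliftRepr (ℛ k x)) (uliftRepr (ℛ k a))]
  refine (uliftRepr_sum2 (ℛ k x) (ℛ k a)
    (fun xl xr al ar => f (xl ⊗ₜ[k] al) ⊗ₜ[k] f (xr ⊗ₜ[k] ar))).trans ?_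
  rw [← (ℛ k x).eq, ← (ℛ k a).eq]
  simp only [sum_tmul, tmul_sum, map_sum, tensorTensorTensorComm_tmul, map_tmul]
  exact Finset.sum_comm

lemma conv_Sf_f (hf : IsLeftModCoalgAction k H f) :
    conv ((antipode (R := k) (A := H)) ∘ₗ f) f = uC := by
  have hm : TensorProduct.map ((antipode (R := k) (A := H)) ∘ₗ f) f =
      (antipode (R := k) (A := H)).rTensor H ∘ₗ TensorProduct.map f f := by
    apply TensorProduct.ext'
    intro u w
    simp
  apply TensorProduct.ext'
  intro x y
  have h1 := LinearMap.congr_fun (comul_comp_f hf) (x ⊗ₜ[k] y)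
  simp only [coe_comp, Function.comp_apply] at h1
  show LinearMap.mul' k H
      (TensorProduct.map ((antipode (R := k) (A := H)) ∘ₗ f) f (comul2 (x ⊗ₜ[k] y))) =
    uC (x ⊗ₜ[k] y)
  rw [hm]
  simp only [coe_comp, Function.comp_apply]
  rw [← h1, mul_antipode_rTensor_comul_apply, hf.counit_act]
  simp [uC, mul'_apply]

/-- the candidate inverse `x ⊗ y ↦ f (g (x ⊗ y₁) ⊗ S y₂)`. -/
def Tmap (f g : H ⊗[k] H →ₗ[k] H) : H ⊗[k] H →ₗ[k] H :=
  f ∘ₗ TensorProduct.map g (antipode (R := k)) ∘ₗ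
    (TensorProduct.assoc k H H H).symm.toLinearMap ∘ₗ (comul (R := k)).lTensor H

lemma Tmap_tmul (x y : H) {ι : Type*} (r : Coalgebra.Repr k y ι) :
    Tmap f g (x ⊗ₜ[k] y) =
      ∑ i ∈ r.index, f (g (x ⊗ₜ r.left i) ⊗ₜ antipode (R := k) (r.right i)) := by
  simp only [Tmap, coe_comp, Function.comp_apply, lTensor_tmul, LinearEquiv.coe_coe]
  rw [← r.eq]
  simp [tmul_sum, map_sum, assoc_symm_tmul]

def sigma : H ⊗[k] (H ⊗[k] H) →ₗ[k] (H ⊗[k] H) ⊗[k] ((H ⊗[k] H) ⊗[k] H) :=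
  (TensorProduct.assoc k (H ⊗[k] H) (H ⊗[k] H) H).toLinearMap ∘ₗ
    (comul2 (k := k) (H := H)).rTensor H ∘ₗ (TensorProduct.assoc k H H H).symm.toLinearMap

set_option synthInstance.maxHeartbeats 800000 in
set_option maxHeartbeats 1000000 in
lemma L1 (h : IsMatchedPairOfActions k H f g) :
    f ∘ₗ (LinearMap.mul' k H).lTensor H =
      LinearMap.mul' k H ∘ₗ TensorProduct.map f (f ∘ₗ g.rTensor H) ∘ₗ sigma := by
  ext x a b
  simp only [sigma, comul2, coe_comp, Function.comp_apply, LinearEquiv.coe_coe, lTensor_tmul,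
    mul'_apply, assoc_symm_tmul, rTensor_tmul, map_tmul, compr₂_apply, mk_apply,
    AlgebraTensorModule.curry_apply, curry_apply, coe_restrictScalars]
  rw [h.mp1 x a b (uliftRepr (ℛ k x)) (uliftRepr (ℛ k a))]
  refine (uliftRepr_sum2 (ℛ k x) (ℛ k a)
    (fun xl xr al ar => f (xl ⊗ₜ[k] al) * f (g (xr ⊗ₜ[k] ar) ⊗ₜ[k] b))).trans ?_
  rw [← (ℛ k x).eq, ← (ℛ k a).eq]
  simp only [sum_tmul, tmul_sum, map_sum, tensorTensorTensorComm_tmul, rTensor_tmul, map_tmul,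
    mul'_apply, coe_comp, Function.comp_apply, LinearEquiv.coe_coe, assoc_tmul]
  exact Finset.sum_comm

def Theta1 (f g : H ⊗[k] H →ₗ[k] H) : (H ⊗[k] H) ⊗[k] (H ⊗[k] (H ⊗[k] H)) →ₗ[k] H :=
  LinearMap.mul' k H ∘ₗ
    TensorProduct.map f (f ∘ₗ TensorProduct.map g (antipode (R := k)) ∘ₗ
      (TensorProduct.assoc k H H H).symm.toLinearMap) ∘ₗ
    (tensorTensorTensorComm k H H H (H ⊗[k] H)).toLinearMap

def Theta2 (f g : H ⊗[k] H →ₗ[k] H) : (H ⊗[k] H) ⊗[k] ((H ⊗[k] H) ⊗[k] H) →ₗ[k] H :=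
  LinearMap.mul' k H ∘ₗ
    TensorProduct.map f (f ∘ₗ g.rTensor H) ∘ₗ
    (TensorProduct.assoc k (H ⊗[k] H) (H ⊗[k] H) H).toLinearMap ∘ₗ
    ((tensorTensorTensorComm k H H H H).toLinearMap).rTensor H ∘ₗ
    (TensorProduct.assoc k (H ⊗[k] H) (H ⊗[k] H) H).symm.toLinearMap

set_option synthInstance.maxHeartbeats 800000 in
set_option maxHeartbeats 1000000 in
lemma C1 : conv f (Tmap f g) = Theta1 f g ∘ₗ
    TensorProduct.map (comul (R := k)) (lam (k := k) (H := H)) := by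
  apply TensorProduct.ext'
  intro x y
  simp only [conv, comul2, Tmap, Theta1, lam, coe_comp, Function.comp_apply,
    LinearEquiv.coe_coe, map_tmul]
  rw [← (ℛ k x).eq, ← (ℛ k y).eq]
  simp only [sum_tmul, tmul_sum, map_sum, tensorTensorTensorComm_tmul, map_tmul,
    lTensor_tmul, mul'_apply, coe_comp, Function.comp_apply, LinearEquiv.coe_coe]

set_option synthInstance.maxHeartbeats 800000 in
set_option maxHeartbeats 1000000 in
lemma C2 : LinearMap.mul' k H ∘ₗ TensorProduct.map f (f ∘ₗ g.rTensor H) ∘ₗ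
      (sigma (k := k) (H := H)) ∘ₗ
      TensorProduct.map (LinearMap.id : H →ₗ[k] H)
        ((antipode (R := k) (A := H)).lTensor H ∘ₗ comul) =
    Theta2 f g ∘ₗ TensorProduct.map (comul (R := k))
      (TensorProduct.map (comul (R := k)) (antipode (R := k)) ∘ₗ comul) := by
  apply TensorProduct.ext'
  intro x y
  simp only [sigma, comul2, Theta2, coe_comp, Function.comp_apply, LinearEquiv.coe_coe,
    map_tmul, id_coe, id_eq]
  rw [← (ℛ k y).eq]
  simp only [map_sum, tmul_sum, lTensor_tmul, assoc_symm_tmul, rTensor_tmul, map_tmul,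
    coe_comp, Function.comp_apply, LinearEquiv.coe_coe]

set_option synthInstance.maxHeartbeats 800000 in
set_option maxHeartbeats 1000000 in
lemma EE : Theta2 f g ∘ₗ
      TensorProduct.map (LinearMap.id : H ⊗[k] H →ₗ[k] H ⊗[k] H)
        (TensorProduct.map (LinearMap.id : H ⊗[k] H →ₗ[k] H ⊗[k] H) (antipode (R := k))) =
    Theta1 f g ∘ₗ
      TensorProduct.map (LinearMap.id : H ⊗[k] H →ₗ[k] H ⊗[k] H)
        (TensorProduct.assoc k H H H).toLinearMap := by
  ext x1 x2 c1 c2 b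
  simp [Theta1, Theta2]

lemma map_id_S_rho : TensorProduct.map (LinearMap.id : H ⊗[k] H →ₗ[k] H ⊗[k] H)
      (antipode (R := k)) ∘ₗ rho (k := k) (H := H) =
    TensorProduct.map (comul (R := k)) (antipode (R := k)) ∘ₗ comul := by
  have : (comul (R := k) (A := H)).rTensor H =
      TensorProduct.map (comul (R := k)) (LinearMap.id : H →ₗ[k] H) := rfl
  rw [rho, this, ← LinearMap.comp_assoc, ← TensorProduct.map_comp, id_comp, comp_id]

lemma FU (h : IsMatchedPairOfActions k H f g) :
    f ∘ₗ TensorProduct.map (LinearMap.id : H →ₗ[k] H)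
        (Algebra.linearMap k H ∘ₗ counit (R := k)) = uC := by
  apply TensorProduct.ext'
  intro x y
  simp only [uC, coe_comp, Function.comp_apply, map_tmul, id_coe, id_eq,
    Algebra.linearMap_apply, mul'_apply]
  rw [Algebra.algebraMap_eq_smul_one, tmul_smul, map_smul, h.mp2 x,
    Algebra.algebraMap_eq_smul_one (R := k), smul_smul, mul_comm]

set_option synthInstance.maxHeartbeats 800000 in
set_option maxHeartbeats 1000000 in
lemma conv_f_T (h : IsMatchedPairOfActions k H f g) : conv f (Tmap f g) = uC := by
  have step2 : TensorProduct.map (comul (R := k)) (lam (k := k) (H := H)) =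
      TensorProduct.map (LinearMap.id : H ⊗[k] H →ₗ[k] H ⊗[k] H)
          (TensorProduct.assoc k H H H).toLinearMap ∘ₗ
        TensorProduct.map (comul (R := k)) (rho (k := k) (H := H)) := by
    rw [← TensorProduct.map_comp, id_comp, assoc_rho]
  have step3 : TensorProduct.map (LinearMap.id : H ⊗[k] H →ₗ[k] H ⊗[k] H)
        (TensorProduct.map (LinearMap.id : H ⊗[k] H →ₗ[k] H ⊗[k] H) (antipode (R := k))) ∘ₗ
        TensorProduct.map (comul (R := k)) (rho (k := k) (H := H)) =
      TensorProduct.map (comul (R := k))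
        (TensorProduct.map (comul (R := k)) (antipode (R := k)) ∘ₗ comul) := by
    rw [← TensorProduct.map_comp, id_comp, map_id_S_rho]
  have step4 : (LinearMap.mul' k H).lTensor H ∘ₗ
        TensorProduct.map (LinearMap.id : H →ₗ[k] H)
          ((antipode (R := k) (A := H)).lTensor H ∘ₗ comul) =
      TensorProduct.map (LinearMap.id : H →ₗ[k] H)
        (Algebra.linearMap k H ∘ₗ counit (R := k)) := by
    have hl : (LinearMap.mul' k H).lTensor H =
        TensorProduct.map (LinearMap.id : H →ₗ[k] H) (LinearMap.mul' k H) := rfl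
    rw [hl, ← TensorProduct.map_comp, id_comp, mul_antipode_lTensor_comul]
  calc conv f (Tmap f g)
      = Theta1 f g ∘ₗ TensorProduct.map (comul (R := k)) (lam (k := k) (H := H)) := C1
    _ = Theta1 f g ∘ₗ TensorProduct.map (LinearMap.id : H ⊗[k] H →ₗ[k] H ⊗[k] H)
          (TensorProduct.assoc k H H H).toLinearMap ∘ₗ
          TensorProduct.map (comul (R := k)) (rho (k := k) (H := H)) := by
        rw [step2]
    _ = (Theta1 f g ∘ₗ TensorProduct.map (LinearMap.id : H ⊗[k] H →ₗ[k] H ⊗[k] H)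
          (TensorProduct.assoc k H H H).toLinearMap) ∘ₗ
          TensorProduct.map (comul (R := k)) (rho (k := k) (H := H)) := by
        rw [LinearMap.comp_assoc]
    _ = (Theta2 f g ∘ₗ TensorProduct.map (LinearMap.id : H ⊗[k] H →ₗ[k] H ⊗[k] H)
          (TensorProduct.map (LinearMap.id : H ⊗[k] H →ₗ[k] H ⊗[k] H)
            (antipode (R := k)))) ∘ₗ
          TensorProduct.map (comul (R := k)) (rho (k := k) (H := H)) := by
        rw [EE]
    _ = Theta2 f g ∘ₗ TensorProduct.map (comul (R := k))
          (TensorProduct.map (comul (R := k)) (antipode (R := k)) ∘ₗ comul) := by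
        rw [LinearMap.comp_assoc, step3]
    _ = LinearMap.mul' k H ∘ₗ TensorProduct.map f (f ∘ₗ g.rTensor H) ∘ₗ
          (sigma (k := k) (H := H)) ∘ₗ
          TensorProduct.map (LinearMap.id : H →ₗ[k] H)
            ((antipode (R := k) (A := H)).lTensor H ∘ₗ comul) := (C2).symm
    _ = (f ∘ₗ (LinearMap.mul' k H).lTensor H) ∘ₗ
          TensorProduct.map (LinearMap.id : H →ₗ[k] H)
            ((antipode (R := k) (A := H)).lTensor H ∘ₗ comul) := by
        rw [L1 h]
        simp only [LinearMap.comp_assoc]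
    _ = f ∘ₗ TensorProduct.map (LinearMap.id : H →ₗ[k] H)
          (Algebra.linearMap k H ∘ₗ counit (R := k)) := by
        rw [LinearMap.comp_assoc, step4]
    _ = uC := FU h

lemma T_eq (h : IsMatchedPairOfActions k H f g) :
    Tmap f g = (antipode (R := k) (A := H)) ∘ₗ f := by
  calc Tmap f g = conv uC (Tmap f g) := (conv_uC_left _).symm
    _ = conv (conv ((antipode (R := k) (A := H)) ∘ₗ f) f) (Tmap f g) := by
        rw [conv_Sf_f h.left_action]
    _ = conv ((antipode (R := k) (A := H)) ∘ₗ f) (conv f (Tmap f g)) := conv_assoc _ _ _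
    _ = conv ((antipode (R := k) (A := H)) ∘ₗ f) uC := by rw [conv_f_T h]
    _ = (antipode (R := k) (A := H)) ∘ₗ f := conv_uC_right _

end MPAux

/-- For a matched pair of actions `(H, ⇀, ↼)` on a Hopf algebra `H`,
`S(x ⇀ y) = (x ↼ y₁) ⇀ S(y₂)`. -/
theorem stmt0 (f g : H ⊗[k] H →ₗ[k] H) (h : IsMatchedPairOfActions k H f g)
    (x y : H) {ι : Type*} (ry : Coalgebra.Repr k y ι) :
    antipode (R := k) (f (x ⊗ₜ y)) =
      ∑ i ∈ ry.index, f (g (x ⊗ₜ ry.left i) ⊗ₜ antipode (R := k) (ry.right i)) := by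
  have h1 := LinearMap.congr_fun (MPAux.T_eq h) (x ⊗ₜ[k] y)
  simp only [LinearMap.coe_comp, Function.comp_apply] at h1
  rw [← h1, MPAux.Tmap_tmul x y ry]

end
end

section
/- Let (H, ⇀, ↼) be a matched pair of actions on a Hopf algebra H and r(x ⊗ y) = (x₁ ⇀ y₁) ⊗ (x₂ ↼ y₂). Then r² = id if and only if for all x, y ∈ H: (x₁ ⇀ y₁) ⇀ (x₂ ↼ y₂) = ε(y)x and (x₁ ⇀ y₁) ↼ (x₂ ↼ y₂) = ε(x)y. -/
open TensorProduct Coalgebra HopfAlgebra LinearMap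

noncomputable section

variable (k H : Type*) [CommRing k] [Ring H] [HopfAlgebra k H]

universe u₁ u₂ u₃ u₄

section Aux
variable {k H}


private lemma sum_counit_right_smul {a : H} {ι : Type*} (ra : Coalgebra.Repr k a ι) :
    ∑ i ∈ ra.index, counit (R := k) (ra.right i) • ra.left i = a := by
  have h := congrArg (TensorProduct.rid k H) (Coalgebra.sum_tmul_counit_eq (R := k) ra)
  simp only [map_sum, TensorProduct.rid_tmul, one_smul] at h
  exact h

private lemma sum_counit_left_smul {a : H} {ι : Type*} (ra : Coalgebra.Repr k a ι) :
    ∑ i ∈ ra.index, counit (R := k) (ra.left i) • ra.right i = a := by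
  have h := congrArg (TensorProduct.lid k H) (Coalgebra.sum_counit_tmul_eq (R := k) ra)
  simp only [map_sum, TensorProduct.lid_tmul, one_smul] at h
  exact h

private lemma braid_tmul (f g : H ⊗[k] H →ₗ[k] H) {x y : H} {ι κ : Type*} (rx : Coalgebra.Repr k x ι)
    (ry : Coalgebra.Repr k y κ) :
    braidOp k H f g (x ⊗ₜ y) =
      ∑ i ∈ rx.index, ∑ j ∈ ry.index,
        f (rx.left i ⊗ₜ ry.left j) ⊗ₜ[k] g (rx.right i ⊗ₜ ry.right j) := by
  have h0 : braidOp k H f g (x ⊗ₜ y) =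
      TensorProduct.map f g ((tensorTensorTensorComm k H H H H)
        (comul (R := k) x ⊗ₜ comul (R := k) y)) := rfl
  rw [h0, ← rx.eq, ← ry.eq]
  simp [TensorProduct.sum_tmul, TensorProduct.tmul_sum, map_sum]
  exact Finset.sum_comm


/-- Reindex a representation into an arbitrary universe. -/
private def reprShift.{w} {a : H} {ι : Type*} (r : Coalgebra.Repr k a ι) :
    Coalgebra.Repr k a (ULift.{w} (Fin r.index.card)) where
  index := Finset.univ
  left i := r.left (r.index.equivFin.symm i.down)
  right i := r.right (r.index.equivFin.symm i.down)
  eq := by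
    rw [← r.eq]
    calc ∑ i : ULift.{w} (Fin r.index.card),
          r.left (r.index.equivFin.symm i.down) ⊗ₜ[k] r.right (r.index.equivFin.symm i.down)
        = ∑ i : Fin r.index.card,
            r.left (r.index.equivFin.symm i) ⊗ₜ[k] r.right (r.index.equivFin.symm i) :=
          Fintype.sum_equiv Equiv.ulift _ _ (fun _ => rfl)
      _ = ∑ i : {z // z ∈ r.index}, r.left i ⊗ₜ[k] r.right i :=
          (Fintype.sum_equiv r.index.equivFin _ _ (fun z => by simp)).symm
      _ = ∑ i ∈ r.index, r.left i ⊗ₜ[k] r.right i := by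
          rw [← Finset.sum_coe_sort r.index (fun i => r.left i ⊗ₜ[k] r.right i)]

private lemma sum_ff_indep (φ ψ : H ⊗[k] H →ₗ[k] H) {a b : H}
    {ι ι' κ κ' : Type*} (ra : Coalgebra.Repr k a ι) (ra' : Coalgebra.Repr k a ι')
    (rb : Coalgebra.Repr k b κ) (rb' : Coalgebra.Repr k b κ') :
    (∑ i ∈ ra.index, ∑ j ∈ rb.index,
      φ (ra.left i ⊗ₜ rb.left j) ⊗ₜ[k] ψ (ra.right i ⊗ₜ rb.right j)) =
    ∑ i ∈ ra'.index, ∑ j ∈ rb'.index,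
      φ (ra'.left i ⊗ₜ rb'.left j) ⊗ₜ[k] ψ (ra'.right i ⊗ₜ rb'.right j) := by
  trans (TensorProduct.map φ ψ ((tensorTensorTensorComm k H H H H)
    (comul (R := k) a ⊗ₜ comul (R := k) b)))
  · rw [← ra.eq, ← rb.eq]
    simp [TensorProduct.sum_tmul, TensorProduct.tmul_sum, map_sum]
    exact Finset.sum_comm
  · rw [← ra'.eq, ← rb'.eq]
    simp [TensorProduct.sum_tmul, TensorProduct.tmul_sum, map_sum]
    exact Finset.sum_comm

private lemma sum_ff_swap_indep (φ ψ : H ⊗[k] H →ₗ[k] H) {a b : H}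
    {ι ι' κ κ' : Type*} (ra : Coalgebra.Repr k a ι) (ra' : Coalgebra.Repr k a ι')
    (rb : Coalgebra.Repr k b κ) (rb' : Coalgebra.Repr k b κ') :
    (∑ i ∈ ra.index, ∑ j ∈ rb.index,
      φ (ra.right i ⊗ₜ rb.right j) ⊗ₜ[k] ψ (ra.left i ⊗ₜ rb.left j)) =
    ∑ i ∈ ra'.index, ∑ j ∈ rb'.index,
      φ (ra'.right i ⊗ₜ rb'.right j) ⊗ₜ[k] ψ (ra'.left i ⊗ₜ rb'.left j) := by
  trans (TensorProduct.map φ ψ ((tensorTensorTensorComm k H H H H)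
    ((TensorProduct.comm k H H) (comul (R := k) a) ⊗ₜ
     (TensorProduct.comm k H H) (comul (R := k) b))))
  · rw [← ra.eq, ← rb.eq]
    simp [TensorProduct.sum_tmul, TensorProduct.tmul_sum, map_sum]
    exact Finset.sum_comm
  · rw [← ra'.eq, ← rb'.eq]
    simp [TensorProduct.sum_tmul, TensorProduct.tmul_sum, map_sum]
    exact Finset.sum_comm

private lemma sum_fg_indep (θ φ ψ : H ⊗[k] H →ₗ[k] H) {a b : H}
    {ι ι' κ κ' : Type*} (ra : Coalgebra.Repr k a ι) (ra' : Coalgebra.Repr k a ι')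
    (rb : Coalgebra.Repr k b κ) (rb' : Coalgebra.Repr k b κ') :
    (∑ i ∈ ra.index, ∑ j ∈ rb.index,
      θ (φ (ra.left i ⊗ₜ rb.left j) ⊗ₜ ψ (ra.right i ⊗ₜ rb.right j))) =
    ∑ i ∈ ra'.index, ∑ j ∈ rb'.index,
      θ (φ (ra'.left i ⊗ₜ rb'.left j) ⊗ₜ ψ (ra'.right i ⊗ₜ rb'.right j)) := by
  have h := congrArg (fun z => θ z) (sum_ff_indep φ ψ ra ra' rb rb')
  simpa only [map_sum] using h
private noncomputable def Xi (f g : H ⊗[k] H →ₗ[k] H) :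
    ((H ⊗[k] H) ⊗[k] (H ⊗[k] H)) ⊗[k] ((H ⊗[k] H) ⊗[k] (H ⊗[k] H)) →ₗ[k] H ⊗[k] H :=
  TensorProduct.map f g
    ∘ₗ TensorProduct.map (TensorProduct.map f g) (TensorProduct.map f g)
    ∘ₗ TensorProduct.map (tensorTensorTensorComm k H H H H).toLinearMap
        (tensorTensorTensorComm k H H H H).toLinearMap
    ∘ₗ (tensorTensorTensorComm k (H ⊗[k] H) (H ⊗[k] H) (H ⊗[k] H) (H ⊗[k] H)).toLinearMap

private lemma Xi_tmul (f g : H ⊗[k] H →ₗ[k] H) (x₁ x₂ x₃ x₄ y₁ y₂ y₃ y₄ : H) :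
    Xi f g (((x₁ ⊗ₜ[k] x₂) ⊗ₜ[k] (x₃ ⊗ₜ[k] x₄)) ⊗ₜ[k] ((y₁ ⊗ₜ[k] y₂) ⊗ₜ[k] (y₃ ⊗ₜ[k] y₄))) =
      f (f (x₁ ⊗ₜ y₁) ⊗ₜ g (x₂ ⊗ₜ y₂)) ⊗ₜ[k] g (f (x₃ ⊗ₜ y₃) ⊗ₜ g (x₄ ⊗ₜ y₄)) := by
  simp [Xi]

private noncomputable def XiS (f g : H ⊗[k] H →ₗ[k] H) :
    ((H ⊗[k] H) ⊗[k] (H ⊗[k] H)) ⊗[k] ((H ⊗[k] H) ⊗[k] (H ⊗[k] H)) →ₗ[k] H ⊗[k] H :=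
  Xi f g ∘ₗ TensorProduct.map (tensorTensorTensorComm k H H H H).toLinearMap
        (tensorTensorTensorComm k H H H H).toLinearMap

private lemma XiS_tmul (f g : H ⊗[k] H →ₗ[k] H) (x₁ x₂ x₃ x₄ y₁ y₂ y₃ y₄ : H) :
    XiS f g (((x₁ ⊗ₜ[k] x₂) ⊗ₜ[k] (x₃ ⊗ₜ[k] x₄)) ⊗ₜ[k] ((y₁ ⊗ₜ[k] y₂) ⊗ₜ[k] (y₃ ⊗ₜ[k] y₄))) =
      f (f (x₁ ⊗ₜ y₁) ⊗ₜ g (x₃ ⊗ₜ y₃)) ⊗ₜ[k] g (f (x₂ ⊗ₜ y₂) ⊗ₜ g (x₄ ⊗ₜ y₄)) := by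
  simp only [XiS, comp_apply, map_tmul, LinearEquiv.coe_coe, tensorTensorTensorComm_tmul]
  exact Xi_tmul f g x₁ x₃ x₂ x₄ y₁ y₃ y₂ y₄

private lemma f_comp_braid {f g : H ⊗[k] H →ₗ[k] H} (hf : IsLeftModCoalgAction k H f)
    (hg : IsRightModCoalgAction k H g) :
    (TensorProduct.rid k H).toLinearMap ∘ₗ (counit (R := k) : H →ₗ[k] k).lTensor H
      ∘ₗ braidOp k H f g = f := by
  apply TensorProduct.ext'
  intro x y
  rw [comp_apply, comp_apply, braid_tmul f g (ℛ k x) (ℛ k y)]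
  simp only [map_sum, lTensor_tmul, LinearEquiv.coe_coe, TensorProduct.rid_tmul, hg.counit_act]
  conv_rhs => rw [← sum_counit_right_smul (ℛ k x), ← sum_counit_right_smul (ℛ k y)]
  rw [TensorProduct.sum_tmul, map_sum]
  refine Finset.sum_congr rfl fun i _ => ?_
  rw [TensorProduct.tmul_sum, map_sum]
  refine Finset.sum_congr rfl fun j _ => ?_
  rw [← smul_tmul', tmul_smul, map_smul, map_smul, smul_smul]

private lemma g_comp_braid {f g : H ⊗[k] H →ₗ[k] H} (hf : IsLeftModCoalgAction k H f)
    (hg : IsRightModCoalgAction k H g) :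
    (TensorProduct.lid k H).toLinearMap ∘ₗ (counit (R := k) : H →ₗ[k] k).rTensor H
      ∘ₗ braidOp k H f g = g := by
  apply TensorProduct.ext'
  intro x y
  rw [comp_apply, comp_apply, braid_tmul f g (ℛ k x) (ℛ k y)]
  simp only [map_sum, rTensor_tmul, LinearEquiv.coe_coe, TensorProduct.lid_tmul, hf.counit_act]
  conv_rhs => rw [← sum_counit_left_smul (ℛ k x), ← sum_counit_left_smul (ℛ k y)]
  rw [TensorProduct.sum_tmul, map_sum]
  refine Finset.sum_congr rfl fun i _ => ?_
  rw [TensorProduct.tmul_sum, map_sum]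
  refine Finset.sum_congr rfl fun j _ => ?_
  rw [← smul_tmul', tmul_smul, map_smul, map_smul, smul_smul]


private noncomputable def zeta : H ⊗[k] (H ⊗[k] (H ⊗[k] H)) →ₗ[k] (H ⊗[k] H) ⊗[k] (H ⊗[k] H) :=
  (TensorProduct.assoc k H H (H ⊗[k] H)).symm.toLinearMap

private lemma zeta_tmul (a b : H) (c : H ⊗[k] H) :
    zeta (a ⊗ₜ (b ⊗ₜ c)) = (a ⊗ₜ[k] b) ⊗ₜ[k] c := by
  simp [zeta]

private noncomputable def Kmap : H ⊗[k] (H ⊗[k] H) →ₗ[k] H ⊗[k] (H ⊗[k] (H ⊗[k] H)) :=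
  ((comul (R := k) : H →ₗ[k] H ⊗[k] H).lTensor H).lTensor H

private lemma Kmap_tmul (a b c : H) :
    Kmap (a ⊗ₜ (b ⊗ₜ c)) = a ⊗ₜ[k] (b ⊗ₜ[k] comul (R := k) c) := by
  simp [Kmap]

private lemma fourfold {x : H} {ι ιxl ιxr ιxrl : Type*} (rx : Coalgebra.Repr k x ι)
    (rxl : ∀ i : rx.ι, Coalgebra.Repr k (rx.left i) ιxl)
    (rxr : ∀ i : rx.ι, Coalgebra.Repr k (rx.right i) ιxr)
    (rxrl : ∀ (i : rx.ι) (q : (rxr i).ι), Coalgebra.Repr k ((rxr i).left q) ιxrl) :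
    ∑ i ∈ rx.index, ∑ p ∈ (rxl i).index, ∑ q ∈ (rxr i).index,
      ((rxl i).left p ⊗ₜ[k] (rxl i).right p) ⊗ₜ[k] ((rxr i).left q ⊗ₜ[k] (rxr i).right q)
    = ∑ i ∈ rx.index, ∑ q ∈ (rxr i).index, ∑ t ∈ (rxrl i q).index,
      (rx.left i ⊗ₜ[k] (rxrl i q).left t) ⊗ₜ[k] ((rxrl i q).right t ⊗ₜ[k] (rxr i).right q) := by
  have S1 := Coalgebra.sum_tmul_tmul_eq (R := k) rx rxl rxr
  have hL : ∑ i ∈ rx.index, ∑ p ∈ (rxl i).index, ∑ q ∈ (rxr i).index,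
      ((rxl i).left p ⊗ₜ[k] (rxl i).right p) ⊗ₜ[k] ((rxr i).left q ⊗ₜ[k] (rxr i).right q)
      = (zeta ∘ₗ Kmap) (∑ i ∈ rx.index, ∑ p ∈ (rxl i).index,
          (rxl i).left p ⊗ₜ[k] ((rxl i).right p ⊗ₜ[k] rx.right i)) := by
    rw [map_sum]
    refine Finset.sum_congr rfl fun i _ => ?_
    rw [map_sum]
    refine Finset.sum_congr rfl fun p _ => ?_
    rw [comp_apply, Kmap_tmul, ← (rxr i).eq]
    simp only [TensorProduct.tmul_sum, map_sum, zeta_tmul]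
  rw [hL, congrArg (zeta ∘ₗ Kmap) S1]
  have hD : (zeta ∘ₗ Kmap) (∑ i ∈ rx.index, ∑ q ∈ (rxr i).index,
        rx.left i ⊗ₜ[k] ((rxr i).left q ⊗ₜ[k] (rxr i).right q))
      = ∑ i ∈ rx.index, ∑ q ∈ (rxr i).index, ∑ u ∈ (ℛ k ((rxr i).right q)).index,
          (rx.left i ⊗ₜ[k] (rxr i).left q) ⊗ₜ[k]
            ((ℛ k ((rxr i).right q)).left u ⊗ₜ[k] (ℛ k ((rxr i).right q)).right u) := by
    rw [map_sum]
    refine Finset.sum_congr rfl fun i _ => ?_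
    rw [map_sum]
    refine Finset.sum_congr rfl fun q _ => ?_
    rw [comp_apply, Kmap_tmul, ← (ℛ k ((rxr i).right q)).eq]
    simp only [TensorProduct.tmul_sum, map_sum, zeta_tmul]
  rw [hD]
  refine Finset.sum_congr rfl fun i _ => ?_
  have S2 := Coalgebra.sum_tmul_tmul_eq (R := k) (rxr i) (rxrl i) (fun q => ℛ k ((rxr i).right q))
  have h2 := congrArg (zeta ∘ₗ (TensorProduct.mk k H (H ⊗[k] (H ⊗[k] H))) (rx.left i)) S2
  simp only [map_sum, comp_apply, TensorProduct.mk_apply, zeta_tmul] at h2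
  exact h2.symm

private lemma sum_rot_cab {M α β γ : Type*} [AddCommMonoid M] {s : Finset α} {t : Finset β}
    {u : Finset γ} (F : α → β → γ → M) :
    (∑ a ∈ s, ∑ b ∈ t, ∑ c ∈ u, F a b c) = ∑ c ∈ u, ∑ a ∈ s, ∑ b ∈ t, F a b c :=
  calc ∑ a ∈ s, ∑ b ∈ t, ∑ c ∈ u, F a b c
      = ∑ a ∈ s, ∑ c ∈ u, ∑ b ∈ t, F a b c :=
        Finset.sum_congr rfl fun a _ => Finset.sum_comm
    _ = ∑ c ∈ u, ∑ a ∈ s, ∑ b ∈ t, F a b c := Finset.sum_comm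

private lemma sum_rot_bca {M α β γ : Type*} [AddCommMonoid M] {s : Finset α} {t : Finset β}
    {u : β → Finset γ} (F : α → (b : β) → γ → M) :
    (∑ a ∈ s, ∑ b ∈ t, ∑ c ∈ u b, F a b c) = ∑ b ∈ t, ∑ c ∈ u b, ∑ a ∈ s, F a b c :=
  calc ∑ a ∈ s, ∑ b ∈ t, ∑ c ∈ u b, F a b c
      = ∑ b ∈ t, ∑ a ∈ s, ∑ c ∈ u b, F a b c := Finset.sum_comm
    _ = ∑ b ∈ t, ∑ c ∈ u b, ∑ a ∈ s, F a b c :=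
        Finset.sum_congr rfl fun b _ => Finset.sum_comm

private lemma smul_tmul_swap (c d : k) (u v : H) :
    (c • u) ⊗ₜ[k] (d • v) = (d • u) ⊗ₜ[k] (c • v) := by
  rw [smul_tmul, smul_tmul, smul_smul, smul_smul, mul_comm]


private def pairRepr (φ : H ⊗[k] H →ₗ[k] H) {a b : H}
    {ι κ : Type*} (ra : Coalgebra.Repr k a ι) (rb : Coalgebra.Repr k b κ)
    (h : comul (R := k) (φ (a ⊗ₜ b)) =
      ∑ i ∈ ra.index, ∑ j ∈ rb.index,
        φ (ra.left i ⊗ₜ rb.left j) ⊗ₜ[k] φ (ra.right i ⊗ₜ rb.right j)) :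
    Coalgebra.Repr k (φ (a ⊗ₜ b)) (ι × κ) where
  index := ra.index ×ˢ rb.index
  left p := φ (ra.left p.1 ⊗ₜ rb.left p.2)
  right p := φ (ra.right p.1 ⊗ₜ rb.right p.2)
  eq := by rw [Finset.sum_product]; exact h.symm

private lemma stepA {f g : H ⊗[k] H →ₗ[k] H} {x y : H}
    {ιx ιy ιxl ιxr ιyl ιyr ιxrl ιyrl : Type*}
    (rx : Coalgebra.Repr k x ιx) (ry : Coalgebra.Repr k y ιy)
    (rxl : ∀ i : rx.ι, Coalgebra.Repr k (rx.left i) ιxl)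
    (rxr : ∀ i : rx.ι, Coalgebra.Repr k (rx.right i) ιxr)
    (ryl : ∀ j : ry.ι, Coalgebra.Repr k (ry.left j) ιyl)
    (ryr : ∀ j : ry.ι, Coalgebra.Repr k (ry.right j) ιyr)
    (hcomf : ∀ (i : rx.ι) (j : ry.ι), comul (R := k) (f (rx.left i ⊗ₜ ry.left j)) =
      ∑ p ∈ (rxl i).index, ∑ q ∈ (ryl j).index,
        f ((rxl i).left p ⊗ₜ (ryl j).left q) ⊗ₜ[k] f ((rxl i).right p ⊗ₜ (ryl j).right q))
    (hcomg : ∀ (i : rx.ι) (j : ry.ι), comul (R := k) (g (rx.right i ⊗ₜ ry.right j)) =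
      ∑ p ∈ (rxr i).index, ∑ q ∈ (ryr j).index,
        g ((rxr i).left p ⊗ₜ (ryr j).left q) ⊗ₜ[k] g ((rxr i).right p ⊗ₜ (ryr j).right q)) :
    braidOp k H f g (braidOp k H f g (x ⊗ₜ y)) =
      XiS f g ((∑ i ∈ rx.index, ∑ p ∈ (rxl i).index, ∑ q ∈ (rxr i).index,
        ((rxl i).left p ⊗ₜ[k] (rxl i).right p) ⊗ₜ[k] ((rxr i).left q ⊗ₜ[k] (rxr i).right q)) ⊗ₜ[k]
        (∑ j ∈ ry.index, ∑ p ∈ (ryl j).index, ∑ q ∈ (ryr j).index,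
        ((ryl j).left p ⊗ₜ[k] (ryl j).right p) ⊗ₜ[k] ((ryr j).left q ⊗ₜ[k] (ryr j).right q))) := by
  rw [braid_tmul f g rx ry, map_sum]
  simp only [map_sum]
  conv_rhs => rw [TensorProduct.sum_tmul]; rw [map_sum]
  simp only [TensorProduct.sum_tmul, map_sum]
  simp only [TensorProduct.tmul_sum, map_sum]
  simp only [XiS_tmul]
  refine Finset.sum_congr rfl fun i _ => ?_
  conv_rhs => rw [sum_rot_cab]
  refine Finset.sum_congr rfl fun j _ => ?_
  rw [braid_tmul f g (pairRepr f (rxl i) (ryl j) (hcomf i j))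
    (pairRepr g (rxr i) (ryr j) (hcomg i j))]
  simp only [pairRepr, Finset.sum_product]
  refine Finset.sum_congr rfl fun p _ => ?_
  exact Finset.sum_comm

set_option maxHeartbeats 1000000 in
private lemma stepC {f g : H ⊗[k] H →ₗ[k] H} {x y : H}
    {ιx ιy ιxl ιxr ιyl ιyr ιxrl ιyrl : Type*}
    (rx : Coalgebra.Repr k x ιx) (ry : Coalgebra.Repr k y ιy)
    (rxr : ∀ i : rx.ι, Coalgebra.Repr k (rx.right i) ιxr)
    (ryr : ∀ j : ry.ι, Coalgebra.Repr k (ry.right j) ιyr)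
    (rxrl : ∀ (i : rx.ι) (q : (rxr i).ι), Coalgebra.Repr k ((rxr i).left q) ιxrl)
    (ryrl : ∀ (j : ry.ι) (q : (ryr j).ι), Coalgebra.Repr k ((ryr j).left q) ιyrl)
    (h5i : ∀ (i : rx.ι) (q : (rxr i).ι) (j : ry.ι) (q₂ : (ryr j).ι),
      (∑ t ∈ (rxrl i q).index, ∑ t₂ ∈ (ryrl j q₂).index,
        f ((rxrl i q).left t ⊗ₜ (ryrl j q₂).left t₂) ⊗ₜ[k]
          g ((rxrl i q).right t ⊗ₜ (ryrl j q₂).right t₂)) =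
      ∑ t ∈ (rxrl i q).index, ∑ t₂ ∈ (ryrl j q₂).index,
        f ((rxrl i q).right t ⊗ₜ (ryrl j q₂).right t₂) ⊗ₜ[k]
          g ((rxrl i q).left t ⊗ₜ (ryrl j q₂).left t₂)) :
    XiS f g ((∑ i ∈ rx.index, ∑ q ∈ (rxr i).index, ∑ t ∈ (rxrl i q).index,
        (rx.left i ⊗ₜ[k] (rxrl i q).left t) ⊗ₜ[k] ((rxrl i q).right t ⊗ₜ[k] (rxr i).right q)) ⊗ₜ[k]
      (∑ j ∈ ry.index, ∑ q ∈ (ryr j).index, ∑ t ∈ (ryrl j q).index,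
        (ry.left j ⊗ₜ[k] (ryrl j q).left t) ⊗ₜ[k] ((ryrl j q).right t ⊗ₜ[k] (ryr j).right q))) =
    Xi f g ((∑ i ∈ rx.index, ∑ q ∈ (rxr i).index, ∑ t ∈ (rxrl i q).index,
        (rx.left i ⊗ₜ[k] (rxrl i q).left t) ⊗ₜ[k] ((rxrl i q).right t ⊗ₜ[k] (rxr i).right q)) ⊗ₜ[k]
      (∑ j ∈ ry.index, ∑ q ∈ (ryr j).index, ∑ t ∈ (ryrl j q).index,
        (ry.left j ⊗ₜ[k] (ryrl j q).left t) ⊗ₜ[k] ((ryrl j q).right t ⊗ₜ[k] (ryr j).right q))) := by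
  conv_lhs => rw [TensorProduct.sum_tmul]; rw [map_sum]
  conv_rhs => rw [TensorProduct.sum_tmul]; rw [map_sum]
  simp only [TensorProduct.sum_tmul, map_sum]
  simp only [TensorProduct.tmul_sum, map_sum]
  simp only [XiS_tmul, Xi_tmul]
  refine Finset.sum_congr rfl fun i _ => ?_
  refine Finset.sum_congr rfl fun q _ => ?_
  refine Eq.trans Finset.sum_comm (Eq.trans ?_ Finset.sum_comm.symm)
  refine Finset.sum_congr rfl fun j _ => ?_
  refine Eq.trans Finset.sum_comm (Eq.trans ?_ Finset.sum_comm.symm)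
  refine Finset.sum_congr rfl fun q₂ _ => ?_
  have hL := congrArg (fun z => (TensorProduct.map f g ∘ₗ
      TensorProduct.map ((TensorProduct.mk k H H) (f (rx.left i ⊗ₜ ry.left j)))
        ((TensorProduct.mk k H H).flip (g ((rxr i).right q ⊗ₜ (ryr j).right q₂)))
      ∘ₗ (TensorProduct.comm k H H).toLinearMap) z) (h5i i q j q₂)
  simpa only [map_sum, comp_apply, LinearEquiv.coe_coe, TensorProduct.comm_tmul,
    TensorProduct.map_tmul, TensorProduct.mk_apply, LinearMap.flip_apply] using hL

set_option maxHeartbeats 1000000 in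
private lemma stepE {f g : H ⊗[k] H →ₗ[k] H} {x y : H}
    {ιx ιy ιxl ιxr ιyl ιyr ιxrl ιyrl : Type*}
    (rx : Coalgebra.Repr k x ιx) (ry : Coalgebra.Repr k y ιy)
    (rxl : ∀ i : rx.ι, Coalgebra.Repr k (rx.left i) ιxl)
    (rxr : ∀ i : rx.ι, Coalgebra.Repr k (rx.right i) ιxr)
    (ryl : ∀ j : ry.ι, Coalgebra.Repr k (ry.left j) ιyl)
    (ryr : ∀ j : ry.ι, Coalgebra.Repr k (ry.right j) ιyr)
    (hc1i : ∀ (i : rx.ι) (j : ry.ι),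
      (∑ p ∈ (rxl i).index, ∑ q ∈ (ryl j).index,
        f (f ((rxl i).left p ⊗ₜ (ryl j).left q) ⊗ₜ g ((rxl i).right p ⊗ₜ (ryl j).right q))) =
      counit (R := k) (ry.left j) • rx.left i)
    (hc2i : ∀ (i : rx.ι) (j : ry.ι),
      (∑ p ∈ (rxr i).index, ∑ q ∈ (ryr j).index,
        g (f ((rxr i).left p ⊗ₜ (ryr j).left q) ⊗ₜ g ((rxr i).right p ⊗ₜ (ryr j).right q))) =
      counit (R := k) (rx.right i) • ry.right j) :
    Xi f g ((∑ i ∈ rx.index, ∑ p ∈ (rxl i).index, ∑ q ∈ (rxr i).index,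
        ((rxl i).left p ⊗ₜ[k] (rxl i).right p) ⊗ₜ[k] ((rxr i).left q ⊗ₜ[k] (rxr i).right q)) ⊗ₜ[k]
      (∑ j ∈ ry.index, ∑ p ∈ (ryl j).index, ∑ q ∈ (ryr j).index,
        ((ryl j).left p ⊗ₜ[k] (ryl j).right p) ⊗ₜ[k] ((ryr j).left q ⊗ₜ[k] (ryr j).right q))) =
    x ⊗ₜ[k] y := by
  conv_lhs => rw [TensorProduct.sum_tmul]; rw [map_sum]
  simp only [TensorProduct.sum_tmul, map_sum]
  simp only [TensorProduct.tmul_sum, map_sum]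
  simp only [Xi_tmul]
  conv_rhs => rw [← sum_counit_right_smul rx, ← sum_counit_left_smul ry,
    TensorProduct.sum_tmul]
  simp only [TensorProduct.sum_tmul, TensorProduct.tmul_sum]
  refine Finset.sum_congr rfl fun i _ => ?_
  refine Eq.trans (sum_rot_cab _) ?_
  refine Finset.sum_congr rfl fun j _ => ?_
  refine Eq.trans (Finset.sum_congr rfl fun p _ => Finset.sum_comm) ?_
  calc ∑ p ∈ (rxl i).index, ∑ p₂ ∈ (ryl j).index, ∑ q ∈ (rxr i).index, ∑ q₂ ∈ (ryr j).index,
        f (f ((rxl i).left p ⊗ₜ (ryl j).left p₂) ⊗ₜ g ((rxl i).right p ⊗ₜ (ryl j).right p₂)) ⊗ₜ[k]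
          g (f ((rxr i).left q ⊗ₜ (ryr j).left q₂) ⊗ₜ g ((rxr i).right q ⊗ₜ (ryr j).right q₂))
      = ∑ p ∈ (rxl i).index, ∑ p₂ ∈ (ryl j).index,
          (f (f ((rxl i).left p ⊗ₜ (ryl j).left p₂) ⊗ₜ g ((rxl i).right p ⊗ₜ (ryl j).right p₂)) ⊗ₜ[k]
            (∑ q ∈ (rxr i).index, ∑ q₂ ∈ (ryr j).index,
              g (f ((rxr i).left q ⊗ₜ (ryr j).left q₂) ⊗ₜ g ((rxr i).right q ⊗ₜ (ryr j).right q₂)))) := by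
        simp only [TensorProduct.tmul_sum]
    _ = ∑ p ∈ (rxl i).index, ∑ p₂ ∈ (ryl j).index,
          (f (f ((rxl i).left p ⊗ₜ (ryl j).left p₂) ⊗ₜ g ((rxl i).right p ⊗ₜ (ryl j).right p₂)) ⊗ₜ[k]
            (counit (R := k) (rx.right i) • ry.right j)) := by rw [hc2i i j]
    _ = (∑ p ∈ (rxl i).index, ∑ p₂ ∈ (ryl j).index,
          f (f ((rxl i).left p ⊗ₜ (ryl j).left p₂) ⊗ₜ g ((rxl i).right p ⊗ₜ (ryl j).right p₂))) ⊗ₜ[k]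
            (counit (R := k) (rx.right i) • ry.right j) := by
        simp only [TensorProduct.sum_tmul]
    _ = (counit (R := k) (ry.left j) • rx.left i) ⊗ₜ[k]
          (counit (R := k) (rx.right i) • ry.right j) := by rw [hc1i i j]
    _ = (counit (R := k) (rx.right i) • rx.left i) ⊗ₜ[k]
          (counit (R := k) (ry.left j) • ry.right j) := smul_tmul_swap _ _ _ _

private lemma master {f g : H ⊗[k] H →ₗ[k] H} {x y : H}
    {ιx ιy ιxl ιxr ιyl ιyr ιxrl ιyrl : Type*}
    (rx : Coalgebra.Repr k x ιx) (ry : Coalgebra.Repr k y ιy)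
    (rxl : ∀ i : rx.ι, Coalgebra.Repr k (rx.left i) ιxl)
    (rxr : ∀ i : rx.ι, Coalgebra.Repr k (rx.right i) ιxr)
    (ryl : ∀ j : ry.ι, Coalgebra.Repr k (ry.left j) ιyl)
    (ryr : ∀ j : ry.ι, Coalgebra.Repr k (ry.right j) ιyr)
    (rxrl : ∀ (i : rx.ι) (q : (rxr i).ι), Coalgebra.Repr k ((rxr i).left q) ιxrl)
    (ryrl : ∀ (j : ry.ι) (q : (ryr j).ι), Coalgebra.Repr k ((ryr j).left q) ιyrl)
    (hcomf : ∀ (i : rx.ι) (j : ry.ι), comul (R := k) (f (rx.left i ⊗ₜ ry.left j)) =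
      ∑ p ∈ (rxl i).index, ∑ q ∈ (ryl j).index,
        f ((rxl i).left p ⊗ₜ (ryl j).left q) ⊗ₜ[k] f ((rxl i).right p ⊗ₜ (ryl j).right q))
    (hcomg : ∀ (i : rx.ι) (j : ry.ι), comul (R := k) (g (rx.right i ⊗ₜ ry.right j)) =
      ∑ p ∈ (rxr i).index, ∑ q ∈ (ryr j).index,
        g ((rxr i).left p ⊗ₜ (ryr j).left q) ⊗ₜ[k] g ((rxr i).right p ⊗ₜ (ryr j).right q))
    (h5i : ∀ (i : rx.ι) (q : (rxr i).ι) (j : ry.ι) (q₂ : (ryr j).ι),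
      (∑ t ∈ (rxrl i q).index, ∑ t₂ ∈ (ryrl j q₂).index,
        f ((rxrl i q).left t ⊗ₜ (ryrl j q₂).left t₂) ⊗ₜ[k]
          g ((rxrl i q).right t ⊗ₜ (ryrl j q₂).right t₂)) =
      ∑ t ∈ (rxrl i q).index, ∑ t₂ ∈ (ryrl j q₂).index,
        f ((rxrl i q).right t ⊗ₜ (ryrl j q₂).right t₂) ⊗ₜ[k]
          g ((rxrl i q).left t ⊗ₜ (ryrl j q₂).left t₂))
    (hc1i : ∀ (i : rx.ι) (j : ry.ι),
      (∑ p ∈ (rxl i).index, ∑ q ∈ (ryl j).index,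
        f (f ((rxl i).left p ⊗ₜ (ryl j).left q) ⊗ₜ g ((rxl i).right p ⊗ₜ (ryl j).right q))) =
      counit (R := k) (ry.left j) • rx.left i)
    (hc2i : ∀ (i : rx.ι) (j : ry.ι),
      (∑ p ∈ (rxr i).index, ∑ q ∈ (ryr j).index,
        g (f ((rxr i).left p ⊗ₜ (ryr j).left q) ⊗ₜ g ((rxr i).right p ⊗ₜ (ryr j).right q))) =
      counit (R := k) (rx.right i) • ry.right j) :
    braidOp k H f g (braidOp k H f g (x ⊗ₜ y)) = x ⊗ₜ y := by
  have hABx := fourfold rx rxl rxr rxrl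
  have hABy := fourfold ry ryl ryr ryrl
  rw [stepA (ιxrl := ιxrl) (ιyrl := ιyrl) rx ry rxl rxr ryl ryr hcomf hcomg, hABx, hABy,
    stepC (ιxl := ιxl) (ιyl := ιyl) rx ry rxr ryr rxrl ryrl h5i, ← hABx, ← hABy]
  exact stepE (ιxrl := ιxrl) (ιyrl := ιyrl) rx ry rxl rxr ryl ryr hc1i hc2i

end Aux

/-- `r² = id` iff `(x₁ ⇀ y₁) ⇀ (x₂ ↼ y₂) = ε(y)x` and
`(x₁ ⇀ y₁) ↼ (x₂ ↼ y₂) = ε(x)y` for all `x, y`. -/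
theorem stmt10 (f g : H ⊗[k] H →ₗ[k] H) (h : IsMatchedPairOfActions k H f g) :
    braidOp k H f g ∘ₗ braidOp k H f g = LinearMap.id ↔
    ∀ (x y : H) {ι κ : Type _} (rx : Coalgebra.Repr k x ι) (ry : Coalgebra.Repr k y κ),
      (∑ i ∈ rx.index, ∑ j ∈ ry.index,
          f (f (rx.left i ⊗ₜ ry.left j) ⊗ₜ g (rx.right i ⊗ₜ ry.right j))) =
        counit (R := k) y • x ∧
      (∑ i ∈ rx.index, ∑ j ∈ ry.index,
          g (f (rx.left i ⊗ₜ ry.left j) ⊗ₜ g (rx.right i ⊗ₜ ry.right j))) =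
        counit (R := k) x • y := by
  constructor
  · intro h2 x y ι κ rx ry
    constructor
    · calc (∑ i ∈ rx.index, ∑ j ∈ ry.index,
            f (f (rx.left i ⊗ₜ ry.left j) ⊗ₜ g (rx.right i ⊗ₜ ry.right j)))
          = f (braidOp k H f g (x ⊗ₜ y)) := by
            rw [braid_tmul f g rx ry]; simp only [map_sum]
        _ = ((TensorProduct.rid k H).toLinearMap ∘ₗ (counit (R := k) : H →ₗ[k] k).lTensor H
              ∘ₗ braidOp k H f g) (braidOp k H f g (x ⊗ₜ y)) := by
            rw [f_comp_braid h.left_action h.right_action]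
        _ = (TensorProduct.rid k H) (((counit (R := k) : H →ₗ[k] k).lTensor H)
              ((braidOp k H f g ∘ₗ braidOp k H f g) (x ⊗ₜ y))) := rfl
        _ = counit (R := k) y • x := by rw [h2]; simp
    · calc (∑ i ∈ rx.index, ∑ j ∈ ry.index,
            g (f (rx.left i ⊗ₜ ry.left j) ⊗ₜ g (rx.right i ⊗ₜ ry.right j)))
          = g (braidOp k H f g (x ⊗ₜ y)) := by
            rw [braid_tmul f g rx ry]; simp only [map_sum]
        _ = ((TensorProduct.lid k H).toLinearMap ∘ₗ (counit (R := k) : H →ₗ[k] k).rTensor H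
              ∘ₗ braidOp k H f g) (braidOp k H f g (x ⊗ₜ y)) := by
            rw [g_comp_braid h.left_action h.right_action]
        _ = (TensorProduct.lid k H) (((counit (R := k) : H →ₗ[k] k).rTensor H)
              ((braidOp k H f g ∘ₗ braidOp k H f g) (x ⊗ₜ y))) := rfl
        _ = counit (R := k) x • y := by rw [h2]; simp
  · intro hc
    apply TensorProduct.ext'
    intro x y
    show braidOp k H f g (braidOp k H f g (x ⊗ₜ y)) = x ⊗ₜ y
    refine master (ℛ k x) (ℛ k y) (fun i => ℛ k _) (fun i => ℛ k _) (fun j => ℛ k _)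
      (fun j => ℛ k _) (fun i q => ℛ k _) (fun j q => ℛ k _) ?_ ?_ ?_ ?_ ?_
    · intro i j
      exact (h.left_action.comul_act _ _ (reprShift (ℛ k _)) (reprShift (ℛ k _))).trans
        (sum_ff_indep f f _ _ _ _)
    · intro i j
      exact (h.right_action.comul_act _ _ (reprShift (ℛ k _)) (reprShift (ℛ k _))).trans
        (sum_ff_indep g g _ _ _ _)
    · intro i q j q₂
      refine (sum_ff_indep f g _ (reprShift (ℛ k _)) _ (reprShift (ℛ k _))).trans ?_
      refine (h.mp5 _ _ (reprShift (ℛ k _)) (reprShift (ℛ k _))).trans ?_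
      exact sum_ff_swap_indep f g _ _ _ _
    · intro i j
      refine (sum_fg_indep f f g _ (reprShift (ℛ k _)) _ (reprShift (ℛ k _))).trans ?_
      exact (hc _ _ (reprShift (ℛ k _)) (reprShift (ℛ k _))).1
    · intro i j
      refine (sum_fg_indep g f g _ (reprShift (ℛ k _)) _ (reprShift (ℛ k _))).trans ?_
      exact (hc _ _ (reprShift (ℛ k _)) (reprShift (ℛ k _))).2

end
end
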